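/- arXiv:1907.10590 — 2 statements merged into one kernel-verified Lean document; each statement's English description precedes it below -/
import Mathlib

section
/- Fix an execution of the Eneström–Phragmén procedure and a subset J of candidates. Let p = min{s : w_*[s] ≤ q} (which satisfies p ≤ n), and for s ≤ p let p_J(s) denote the number of seats allocated to members of J during steps 0,…,s−1. Then v_J[s] ≥ v_J − p_J(s)·q for all s ≤ p, where v_J[s] = Σ_{k : A_k = J} v_k[s]. -/
/-!
The Eneström–Phragmén procedure.

We fix a number of seats `n ≥ 1`, a finite set `ι` of candidates with capacities
`m i ∈ ℕ∞`, a finite set `κ` of vote types, and for each vote type a positive weight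
`v k` and a nonempty approval set `A k`.  The total vote is `V = ∑ k, v k` and the
(Droop) quota is `q = V / (n + 1)`.  An execution of the procedure is recorded by the
vote weights `vk s k` at each step `s`, the seat counts `seats s i`, and the candidate
`winner s` receiving seat `s + 1` (for `s < n`), subject to the rules of the procedure.
-/

namespace EP

/-- The data of an Eneström–Phragmén election. -/
structure Input (ι κ : Type*) [Fintype ι] [DecidableEq ι] [Fintype κ] : Type _ where
  /-- number of seats -/
  n : ℕ
  hn : 1 ≤ n
  /-- capacities of the candidates -/
  m : ι → ℕ∞
  /-- weights of the vote types -/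
  v : κ → ℝ
  hv : ∀ k, 0 < v k
  /-- approval sets of the vote types -/
  A : κ → Finset ι
  hA : ∀ k, (A k).Nonempty

namespace Input

variable {ι κ : Type*} [Fintype ι] [DecidableEq ι] [Fintype κ] (P : Input ι κ)

/-- Total number of votes. -/
noncomputable def V : ℝ := ∑ k, P.v k

/-- The Droop quota `q = v / (n + 1)`. -/
noncomputable def q : ℝ := P.V / (P.n + 1)

/-- Support of candidate `i` given current vote weights `u`:
`w_i = ∑_{k : i ∈ A_k} u_k`. -/
noncomputable def supp (u : κ → ℝ) (i : ι) : ℝ :=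
  ∑ k ∈ Finset.univ.filter (fun k => i ∈ P.A k), u k

/-- Standing assumption: at least `n` candidates have positive initial support. -/
def enough : Prop := P.n ≤ {i : ι | 0 < P.supp P.v i}.ncard

end Input

/-- An execution of the Eneström–Phragmén procedure: at each step `s < n`,
seat `s + 1` is given to an eligible candidate `winner s` of maximal support, and the
votes approving the winner are reduced according to the quota rule. -/
structure Exec {ι κ : Type*} [Fintype ι] [DecidableEq ι] [Fintype κ]
    (P : Input ι κ) : Type _ where
  /-- the vote weights `v_k[s]` -/
  vk : ℕ → κ → ℝ
  /-- the seat counts `n_i[s]` -/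
  seats : ℕ → ι → ℕ
  /-- the candidate receiving seat `s + 1` -/
  winner : ℕ → ι
  vk_init : vk 0 = P.v
  seats_init : ∀ i, seats 0 i = 0
  /-- the winner is eligible -/
  winner_elig : ∀ s < P.n, (seats s (winner s) : ℕ∞) < P.m (winner s)
  /-- the winner maximizes the support among eligible candidates -/
  winner_max : ∀ s < P.n, ∀ i : ι, (seats s i : ℕ∞) < P.m i →
    P.supp (vk s) i ≤ P.supp (vk s) (winner s)
  seats_succ : ∀ s < P.n, ∀ i : ι,
    seats (s + 1) i = if i = winner s then seats s i + 1 else seats s i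
  /-- vote reduction when the winner has at least a quota -/
  vk_succ_ge : ∀ s < P.n, ∀ k, winner s ∈ P.A k → P.q ≤ P.supp (vk s) (winner s) →
    vk (s + 1) k = (1 - P.q / P.supp (vk s) (winner s)) * vk s k
  /-- vote exhaustion when the winner has less than a quota -/
  vk_succ_lt : ∀ s < P.n, ∀ k, winner s ∈ P.A k → P.supp (vk s) (winner s) < P.q →
    vk (s + 1) k = 0
  /-- votes not approving the winner are unchanged -/
  vk_succ_out : ∀ s < P.n, ∀ k, winner s ∉ P.A k → vk (s + 1) k = vk s k

end EP

/-!
As long as every winner reaches the quota, a seat won by a member of `J` scales the weight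
of each vote type approving that winner by `1 - q / w_*`.  The vote types with approval set
exactly `J` form part of the winner's support `w_*`, so their total weight drops by at most
`(q / w_*) · w_* = q`; seats won outside `J` leave it untouched.
-/

namespace EP

open Finset

variable {ι κ : Type*} [Fintype ι] [DecidableEq ι] [Fintype κ]

namespace Input

variable (P : Input ι κ)

/-- The paper's `v_J`, evaluated at the vote weights `u`. -/
noncomputable def weightOn (u : κ → ℝ) (J : Finset ι) : ℝ :=
  ∑ k ∈ univ.filter (fun k => P.A k = J), u k

theorem q_nonneg : 0 ≤ P.q :=
  div_nonneg (sum_nonneg fun k _ => (P.hv k).le) (by positivity)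

theorem weightOn_le_supp {u : κ → ℝ} (hu : ∀ k, 0 ≤ u k) {J : Finset ι} {i : ι}
    (hi : i ∈ J) : P.weightOn u J ≤ P.supp u i :=
  sum_le_sum_of_subset_of_nonneg
    (fun k hk => by
      simp only [mem_filter, mem_univ, true_and] at hk ⊢
      exact hk ▸ hi)
    (fun k _ _ => hu k)

end Input

namespace Exec

variable {P : Input ι κ} (E : Exec P)

/-- The paper's `p_J(s)`. -/
def seatsIn (J : Finset ι) (s : ℕ) : ℕ :=
  ((range s).filter (fun t => E.winner t ∈ J)).card

theorem seatsIn_succ (J : Finset ι) (s : ℕ) :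
    E.seatsIn J (s + 1) = E.seatsIn J s + if E.winner s ∈ J then 1 else 0 := by
  unfold seatsIn
  rw [range_add_one, filter_insert]
  split_ifs
  · exact card_insert_of_notMem (by simp)
  · rfl

theorem vk_nonneg {s : ℕ} (hs : s ≤ P.n) (k : κ) : 0 ≤ E.vk s k := by
  induction s generalizing k with
  | zero => rw [E.vk_init]; exact (P.hv k).le
  | succ s ih =>
    have hsn : s < P.n := hs
    have ih := ih hsn.le
    by_cases hk : E.winner s ∈ P.A k
    · by_cases hw : P.q ≤ P.supp (E.vk s) (E.winner s)
      · rw [E.vk_succ_ge s hsn k hk hw]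
        have hfrac : P.q / P.supp (E.vk s) (E.winner s) ≤ 1 :=
          div_le_one_of_le₀ hw (P.q_nonneg.trans hw)
        exact mul_nonneg (sub_nonneg.mpr hfrac) (ih k)
      · rw [E.vk_succ_lt s hsn k hk (not_le.mp hw)]
    · rw [E.vk_succ_out s hsn k hk]
      exact ih k

theorem weightOn_succ_of_winner_notMem {s : ℕ} (hs : s < P.n) {J : Finset ι}
    (hJ : E.winner s ∉ J) : P.weightOn (E.vk (s + 1)) J = P.weightOn (E.vk s) J :=
  sum_congr rfl fun k hk =>
    E.vk_succ_out s hs k fun h => hJ ((mem_filter.mp hk).2 ▸ h)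

theorem weightOn_succ_ge_of_winner_mem {s : ℕ} (hs : s < P.n)
    (hquota : P.q ≤ P.supp (E.vk s) (E.winner s)) {J : Finset ι} (hJ : E.winner s ∈ J) :
    P.weightOn (E.vk s) J - P.q ≤ P.weightOn (E.vk (s + 1)) J := by
  set w := P.supp (E.vk s) (E.winner s)
  set S := P.weightOn (E.vk s) J
  have hscale : P.weightOn (E.vk (s + 1)) J = (1 - P.q / w) * S := by
    simp only [S, Input.weightOn, mul_sum]
    exact sum_congr rfl fun k hk =>
      E.vk_succ_ge s hs k ((mem_filter.mp hk).2 ▸ hJ) hquota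
  have hSw : S ≤ w := P.weightOn_le_supp (E.vk_nonneg hs.le) hJ
  have hratio : S / w ≤ 1 := div_le_one_of_le₀ hSw (P.q_nonneg.trans hquota)
  have hloss : P.q / w * S ≤ P.q := by
    rw [div_mul_eq_mul_div, mul_div_assoc]
    exact mul_le_of_le_one_right P.q_nonneg hratio
  rw [hscale]
  linarith

theorem weightOn_ge_sub_seatsIn_mul_q {J : Finset ι} {s : ℕ} (hs : s ≤ P.n)
    (hquota : ∀ t < s, P.q ≤ P.supp (E.vk t) (E.winner t)) :
    P.weightOn P.v J - E.seatsIn J s * P.q ≤ P.weightOn (E.vk s) J := by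
  induction s with
  | zero => simp [seatsIn, E.vk_init]
  | succ s ih =>
    have hsn : s < P.n := hs
    have ih := ih hsn.le fun t ht => hquota t (ht.trans s.lt_succ_self)
    rw [E.seatsIn_succ]
    by_cases hJ : E.winner s ∈ J
    · have := E.weightOn_succ_ge_of_winner_mem hsn (hquota s s.lt_succ_self) hJ
      simp only [hJ, if_true, Nat.cast_add, Nat.cast_one]
      linarith
    · simpa only [hJ, if_false, add_zero, E.weightOn_succ_of_winner_notMem hsn hJ] using ih

end Exec

end EP

open EP in
theorem enestrom_phragmen_vJ_lower_bound_general
    {ι κ : Type*} [Fintype ι] [DecidableEq ι] [Fintype κ]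
    (P : Input ι κ) (E : Exec P) (J : Finset ι)
    (p : ℕ) (hpn : p ≤ P.n)
    (hmin : ∀ s < p, P.q < P.supp (E.vk s) (E.winner s)) :
    ∀ s ≤ p,
      (∑ k ∈ Finset.univ.filter (fun k => P.A k = J), P.v k) -
        (((Finset.range s).filter (fun t => E.winner t ∈ J)).card : ℝ) * P.q
      ≤ ∑ k ∈ Finset.univ.filter (fun k => P.A k = J), E.vk s k :=
  fun _ hs => E.weightOn_ge_sub_seatsIn_mul_q (hs.trans hpn)
    fun t ht => (hmin t (ht.trans_le hs)).le

open EP in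
/-- fix an execution and a subset `J`.  Let `p = min {s : w_*[s] ≤ q}`
(characterized by: `p ≤ n`, at every earlier step the winner's support exceeds `q`, and
at step `p` every eligible candidate has support at most `q`).  Then for all `s ≤ p`,
`v_J[s] ≥ v_J - p_J(s) · q`, where `p_J(s)` is the number of seats allocated to members
of `J` during steps `0, …, s - 1`. -/
theorem enestrom_phragmen_vJ_lower_bound
    {ι κ : Type*} [Fintype ι] [DecidableEq ι] [Fintype κ]
    (P : Input ι κ) (henough : P.enough) (E : Exec P) (J : Finset ι)
    (p : ℕ) (hpn : p ≤ P.n)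
    (hmin : ∀ s < p, P.q < P.supp (E.vk s) (E.winner s))
    (hp : ∀ i : ι, (E.seats p i : ℕ∞) < P.m i → P.supp (E.vk p) i ≤ P.q) :
    ∀ s ≤ p,
      (∑ k ∈ Finset.univ.filter (fun k => P.A k = J), P.v k) -
        (((Finset.range s).filter (fun t => E.winner t ∈ J)).card : ℝ) * P.q
      ≤ ∑ k ∈ Finset.univ.filter (fun k => P.A k = J), E.vk s k :=
  enestrom_phragmen_vJ_lower_bound_general P E J p hpn hmin
end

section
/- In the two-party setting with ζ[0] = 0, in any execution of the Eneström–Phragmén procedure: if s ≤ n−3, α[s] = β[s], and seat s+1 is allocated to A, then α[s+1] < β[s+1] (so seat s+2 is allocated to B) and α[s+2] = β[s+2] (so seat s+3 is again the matter of a tie); and symmetrically with A and B interchanged. -/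
/-!
The Eneström–Phragmén procedure in the two-party setting: the candidates are two
parties `A` and `B` of unlimited capacity, and the vote types are `{A}`, `{B}` and
`{A,B}` with step-`s` weights (divided by the total vote `v`) denoted `α s`, `β s`
and `ζ s` respectively; `ρ n = q / v = 1 / (n + 1)` is the normalized Droop quota.
At step `s < n`, seat `s + 1` goes to `A` (recorded by `toA s = true`) or to `B`
(`toA s = false`); the winner must maximize the support (`α s + ζ s` for `A`,
`β s + ζ s` for `B`), and the votes approving the winner are reduced according
to the quota rule.
-/

namespace EP2

/-- The normalized Droop quota `ρ = q / v = 1 / (n + 1)`. -/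
noncomputable def ρ (n : ℕ) : ℝ := 1 / (n + 1)

/-- An execution of the Eneström–Phragmén procedure in the two-party setting, with
`n` seats and initial normalized weights `α0, β0, ζ0` of the vote types
`{A}`, `{B}`, `{A,B}`. -/
structure TPExec (n : ℕ) (α0 β0 ζ0 : ℝ) : Type where
  /-- normalized weight of the votes approving only `A` -/
  α : ℕ → ℝ
  /-- normalized weight of the votes approving only `B` -/
  β : ℕ → ℝ
  /-- normalized weight of the votes approving both `A` and `B` -/
  ζ : ℕ → ℝ
  /-- `toA s = true` iff seat `s + 1` is allocated to party `A` -/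
  toA : ℕ → Bool
  init_α : α 0 = α0
  init_β : β 0 = β0
  init_ζ : ζ 0 = ζ0
  /-- the winner maximizes the support: if `A` wins then `β s + ζ s ≤ α s + ζ s` -/
  choiceA : ∀ s < n, toA s = true → β s ≤ α s
  /-- the winner maximizes the support: if `B` wins then `α s + ζ s ≤ β s + ζ s` -/
  choiceB : ∀ s < n, toA s = false → α s ≤ β s
  stepA_ge : ∀ s < n, toA s = true → ρ n ≤ α s + ζ s →
    α (s + 1) = (1 - ρ n / (α s + ζ s)) * α s ∧
    ζ (s + 1) = (1 - ρ n / (α s + ζ s)) * ζ s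
  stepA_lt : ∀ s < n, toA s = true → α s + ζ s < ρ n →
    α (s + 1) = 0 ∧ ζ (s + 1) = 0
  stepA_β : ∀ s < n, toA s = true → β (s + 1) = β s
  stepB_ge : ∀ s < n, toA s = false → ρ n ≤ β s + ζ s →
    β (s + 1) = (1 - ρ n / (β s + ζ s)) * β s ∧
    ζ (s + 1) = (1 - ρ n / (β s + ζ s)) * ζ s
  stepB_lt : ∀ s < n, toA s = false → β s + ζ s < ρ n →
    β (s + 1) = 0 ∧ ζ (s + 1) = 0
  stepB_α : ∀ s < n, toA s = false → α (s + 1) = α s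

/-- Number of seats allocated to party `A` during steps `a, …, b - 1`. -/
def cntA {n : ℕ} {α0 β0 ζ0 : ℝ} (E : TPExec n α0 β0 ζ0) (a b : ℕ) : ℕ :=
  ((Finset.Ico a b).filter (fun s => E.toA s = true)).card

/-- Number of seats allocated to party `B` during steps `a, …, b - 1`. -/
def cntB {n : ℕ} {α0 β0 ζ0 : ℝ} (E : TPExec n α0 β0 ζ0) (a b : ℕ) : ℕ :=
  ((Finset.Ico a b).filter (fun s => E.toA s = false)).card

/-- Total number of seats allocated to party `A`. -/
def nA {n : ℕ} {α0 β0 ζ0 : ℝ} (E : TPExec n α0 β0 ζ0) : ℕ := cntA E 0 n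

end EP2

/-!
With `ζ[0] = 0` the shared votes stay at zero, so a party whose weight is at least the
quota `ρ` simply loses `ρ` when it wins a seat, and otherwise drops to `0`. Hence the
total weight after `s` steps is at least `1 - sρ ≥ 4ρ`, and tied weights are at least
`2ρ`. If `A` wins the tie, then `α = β - ρ`, so `B` wins the next seat, loses `ρ` as
well, and the tie is restored.
-/

namespace EP2

theorem ρ_pos (n : ℕ) : 0 < ρ n := by unfold ρ; positivity

theorem add_one_mul_ρ (n : ℕ) : ((n : ℝ) + 1) * ρ n = 1 := by unfold ρ; field_simp

namespace TPExec

variable {n : ℕ} {α0 β0 ζ0 : ℝ}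

def swap (E : TPExec n α0 β0 ζ0) : TPExec n β0 α0 ζ0 where
  α := E.β
  β := E.α
  ζ := E.ζ
  toA s := !E.toA s
  init_α := E.init_β
  init_β := E.init_α
  init_ζ := E.init_ζ
  choiceA s hs h := E.choiceB s hs (by simpa using h)
  choiceB s hs h := E.choiceA s hs (by simpa using h)
  stepA_ge s hs h := E.stepB_ge s hs (by simpa using h)
  stepA_lt s hs h := E.stepB_lt s hs (by simpa using h)
  stepA_β s hs h := E.stepB_α s hs (by simpa using h)
  stepB_ge s hs h := E.stepA_ge s hs (by simpa using h)
  stepB_lt s hs h := E.stepA_lt s hs (by simpa using h)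
  stepB_α s hs h := E.stepA_β s hs (by simpa using h)

variable (E : TPExec n α0 β0 ζ0)

@[simp]
theorem swap_toA (t : ℕ) : E.swap.toA t = !E.toA t := rfl

theorem ζ_eq_zero (h0 : ζ0 = 0) : ∀ t ≤ n, E.ζ t = 0 := by
  intro t
  induction t with
  | zero => intro _; exact E.init_ζ.trans h0
  | succ t ih =>
    intro ht
    have hζ := ih (by omega)
    cases hA : E.toA t with
    | true =>
      rcases le_or_gt (ρ n) (E.α t + E.ζ t) with h | h
      · rw [(E.stepA_ge t ht hA h).2, hζ, mul_zero]
      · exact (E.stepA_lt t ht hA h).2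
    | false =>
      rcases le_or_gt (ρ n) (E.β t + E.ζ t) with h | h
      · rw [(E.stepB_ge t ht hA h).2, hζ, mul_zero]
      · exact (E.stepB_lt t ht hA h).2

variable {E} {t : ℕ}

theorem α_succ_eq_sub (ht : t < n) (hζ : E.ζ t = 0) (hA : E.toA t = true)
    (h : ρ n ≤ E.α t) : E.α (t + 1) = E.α t - ρ n := by
  have hα := (E.stepA_ge t ht hA (by rwa [hζ, add_zero])).1
  have hα_ne : E.α t ≠ 0 := ((ρ_pos n).trans_le h).ne'
  rw [hα, hζ, add_zero]
  field_simp

theorem sub_ρ_le_α_succ (ht : t < n) (hζ : E.ζ t = 0) (hA : E.toA t = true) :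
    E.α t - ρ n ≤ E.α (t + 1) := by
  rcases le_or_gt (ρ n) (E.α t) with h | h
  · exact (α_succ_eq_sub ht hζ hA h).ge
  · rw [(E.stepA_lt t ht hA (by rwa [hζ, add_zero])).1]
    linarith

theorem sub_ρ_le_α_add_β_succ (ht : t < n) (hζ : E.ζ t = 0) :
    E.α t + E.β t - ρ n ≤ E.α (t + 1) + E.β (t + 1) := by
  cases hA : E.toA t with
  | true =>
    have hα := sub_ρ_le_α_succ ht hζ hA
    rw [E.stepA_β t ht hA]
    linarith
  | false =>
    have hβ : E.β t - ρ n ≤ E.β (t + 1) :=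
      sub_ρ_le_α_succ (E := E.swap) ht hζ (by simp [hA])
    rw [E.stepB_α t ht hA]
    linarith

variable (E)

theorem one_sub_mul_ρ_le_α_add_β (h0 : ζ0 = 0) (hsum : α0 + β0 = 1) :
    ∀ t ≤ n, 1 - t * ρ n ≤ E.α t + E.β t := by
  intro t
  induction t with
  | zero => intro _; rw [E.init_α, E.init_β, hsum]; simp
  | succ t ih =>
    intro ht
    have hstep := sub_ρ_le_α_add_β_succ ht (E.ζ_eq_zero h0 t (by omega))
    push_cast
    linarith [ih (by omega)]

variable {E}

theorem toA_succ_and_tie_of_tie_of_toA {s : ℕ} (hs : s + 1 < n) (hζ : E.ζ s = 0)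
    (hζ_succ : E.ζ (s + 1) = 0) (hρ : 2 * ρ n ≤ E.α s) (htie : E.α s = E.β s)
    (hA : E.toA s = true) :
    E.α (s + 1) < E.β (s + 1) ∧ E.toA (s + 1) = false ∧ E.α (s + 2) = E.β (s + 2) := by
  have hρ_pos := ρ_pos n
  have hα₁ := α_succ_eq_sub (by omega) hζ hA (by linarith)
  have hβ₁ := E.stepA_β s (by omega) hA
  have hlt : E.α (s + 1) < E.β (s + 1) := by rw [hα₁, hβ₁, ← htie]; linarith
  have hB : E.toA (s + 1) = false :=
    Bool.eq_false_iff.2 fun h => (E.choiceA _ hs h).not_gt hlt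
  have hβ₂ : E.β (s + 2) = E.β (s + 1) - ρ n :=
    α_succ_eq_sub (E := E.swap) hs hζ_succ (by simp [hB])
      (by change ρ n ≤ E.β (s + 1); rw [hβ₁, ← htie]; linarith)
  refine ⟨hlt, hB, ?_⟩
  rw [E.stepB_α _ hs hB, hβ₂, hα₁, hβ₁, htie]

end TPExec

end EP2

open EP2 in
theorem enestrom_phragmen_two_party_ties_recur_general
    (n : ℕ) (α0 β0 : ℝ)
    (hsum : α0 + β0 + 0 = 1)
    (E : TPExec n α0 β0 0) (s : ℕ) (hs : s + 3 ≤ n) (htie : E.α s = E.β s) :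
    (E.toA s = true →
      E.α (s + 1) < E.β (s + 1) ∧ E.toA (s + 1) = false ∧
      E.α (s + 2) = E.β (s + 2)) ∧
    (E.toA s = false →
      E.β (s + 1) < E.α (s + 1) ∧ E.toA (s + 1) = true ∧
      E.α (s + 2) = E.β (s + 2)) := by
  have hζ := E.ζ_eq_zero rfl
  have htotal := E.one_sub_mul_ρ_le_α_add_β rfl (by simpa using hsum) s (by omega)
  have h4ρ : 4 * ρ n ≤ 1 - s * ρ n := by
    have : (s : ℝ) + 3 ≤ n := by exact_mod_cast hs
    nlinarith [add_one_mul_ρ n, ρ_pos n]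
  have h2ρ : 2 * ρ n ≤ E.α s := by linarith
  refine ⟨TPExec.toA_succ_and_tie_of_tie_of_toA (by omega) (hζ s (by omega))
    (hζ (s + 1) (by omega)) h2ρ htie, fun hB => ?_⟩
  have h2ρ' : 2 * ρ n ≤ E.β s := htie ▸ h2ρ
  obtain ⟨hlt, hA, htie₂⟩ := TPExec.toA_succ_and_tie_of_tie_of_toA (E := E.swap) (by omega)
    (hζ s (by omega)) (hζ (s + 1) (by omega)) h2ρ' htie.symm (by simp [hB])
  exact ⟨hlt, by simpa using hA, htie₂.symm⟩

open EP2 in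
/-- Lemma 3 of the paper: in the two-party setting with `ζ[0] = 0`, in
any execution, if `s ≤ n-3`, `α[s] = β[s]` and seat `s+1` goes to `A`, then
`α[s+1] < β[s+1]` (so seat `s+2` goes to `B`) and `α[s+2] = β[s+2]` (so seat `s+3` is
again the matter of a tie); and symmetrically with `A` and `B` interchanged. -/
theorem enestrom_phragmen_two_party_ties_recur
    (n : ℕ) (hn : 1 ≤ n) (α0 β0 : ℝ)
    (hα0 : 0 < α0) (hβ0 : 0 < β0) (hsum : α0 + β0 + 0 = 1)
    (E : TPExec n α0 β0 0) (s : ℕ) (hs : s + 3 ≤ n) (htie : E.α s = E.β s) :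
    (E.toA s = true →
      E.α (s + 1) < E.β (s + 1) ∧ E.toA (s + 1) = false ∧
      E.α (s + 2) = E.β (s + 2)) ∧
    (E.toA s = false →
      E.β (s + 1) < E.α (s + 1) ∧ E.toA (s + 1) = true ∧
      E.α (s + 2) = E.β (s + 2)) :=
  enestrom_phragmen_two_party_ties_recur_general n α0 β0 hsum E s hs htie
end
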